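/- Given L ≥ 1, real parameters J_u > 0, η > 0, A > 0, 0 < α < 1, ordered nodes 0 < θ_1 < θ_2 < … < θ_L and positive weights μ_1, …, μ_L > 0, set γ_ℓ = (2 sin(πα)/(π J_u)) θ_ℓ^{1−2α} and Υ_ℓ = A Γ(1+α) γ_ℓ, and let S be the (L+2)×(L+2) real matrix whose row 0 and column 0 are zero and whose remaining entries are S(1,1) = −1/(J_u η), S(1,1+ℓ) = −A Γ(1+α) μ_ℓ / J_u, S(1+ℓ,1) = −γ_ℓ/η, and S(1+ℓ,1+j) = −Υ_ℓ μ_j − θ_ℓ² δ_{ℓj}. Let ϱ(S) denote the spectral radius of S, i.e. the maximum of |λ| over all (complex) eigenvalues λ of S. Then max( θ_L² , 1/(J_u η) + ∑_{ℓ=1}^L μ_ℓ Υ_ℓ ) ≤ ϱ(S) ≤ θ_L² + 1/(J_u η) + ∑_{ℓ=1}^L μ_ℓ Υ_ℓ. -/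

import Mathlib

/-!
Writing `S = -(u vᵀ + diag d)` with `u = (0, 1/J_u, γ)`, `v = (0, 1/η, A Γ(1+α) μ)` and
`d = (0, 0, θ²)`, the positive diagonal similarity `diag (√(v/u))` turns `S` into `-N` with
`N = w wᵀ + diag d` symmetric positive semidefinite, `w = √(u v)`. Hence the spectrum of `S` is
real and nonpositive, and `ϱ(S)` is the largest eigenvalue of `N`. Since
`xᵀ N x = (w ⬝ x)² + ∑ dᵢ xᵢ²`, Cauchy–Schwarz bounds this Rayleigh quotient by `|w|² + max d`,
while testing it at the last basis vector and at `w` gives `ϱ(S) ≥ θ_L²` and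
`ϱ(S) ≥ |w|² = ∑ uᵢ vᵢ = 1/(J_u η) + ∑ μ_ℓ Υ_ℓ`.
-/

open Matrix

namespace Matrix

variable {n : Type*} [Fintype n] [DecidableEq n]

theorem charpoly_eq_of_diagonal_mul_eq {R : Type*} [CommRing R] {M N : Matrix n n R} {e : n → R}
    (he : IsUnit e) (h : diagonal e * M = N * diagonal e) : M.charpoly = N.charpoly := by
  obtain ⟨D, hD⟩ := isUnit_diagonal.2 he
  have hM : M = ((D⁻¹ : (Matrix n n R)ˣ) : Matrix n n R) * (N * D) := by
    rw [hD, ← h, ← hD, ← mul_assoc, Units.inv_mul, one_mul]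
  rw [hM, charpoly_mul_comm, mul_assoc, Units.mul_inv, mul_one]

theorem IsHermitian.mul_dotProduct_le_dotProduct_mulVec {A : Matrix n n ℝ} (hA : A.IsHermitian)
    {c : ℝ} (hc : ∀ i, c ≤ hA.eigenvalues i) (x : n → ℝ) :
    c * (x ⬝ᵥ x) ≤ x ⬝ᵥ (A *ᵥ x) := by
  have hpsd : (A - algebraMap ℝ _ c).PosSemidef := by
    refine posSemidef_iff_isHermitian_and_spectrum_nonneg.2 ⟨?_, ?_⟩
    · exact hA.sub (isHermitian_diagonal_of_self_adjoint _ (by simp [IsSelfAdjoint]))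
    · rw [← spectrum.sub_singleton_eq, hA.spectrum_real_eq_range_eigenvalues]
      rintro _ ⟨_, ⟨i, rfl⟩, _, rfl, rfl⟩
      simpa using hc i
  simpa [Algebra.algebraMap_eq_smul_one, sub_mulVec, dotProduct_sub, smul_mulVec]
    using hpsd.dotProduct_mulVec_nonneg x

theorem IsHermitian.exists_eigenvalues_mul_le [Nonempty n] {A : Matrix n n ℝ}
    (hA : A.IsHermitian) (x : n → ℝ) :
    ∃ i, hA.eigenvalues i * (x ⬝ᵥ x) ≤ x ⬝ᵥ (A *ᵥ x) := by
  obtain ⟨i, -, hi⟩ := Finset.univ.exists_min_image hA.eigenvalues Finset.univ_nonempty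
  exact ⟨i, hA.mul_dotProduct_le_dotProduct_mulVec (fun j => hi j (Finset.mem_univ j)) x⟩

theorem IsHermitian.exists_dotProduct_mulVec_eq_eigenvalues {A : Matrix n n ℝ}
    (hA : A.IsHermitian) (i : n) :
    ∃ b : n → ℝ, b ⬝ᵥ b = 1 ∧ b ⬝ᵥ (A *ᵥ b) = hA.eigenvalues i := by
  refine ⟨hA.eigenvectorBasis i, ?_, ?_⟩
  · have h := real_inner_self_eq_norm_sq (hA.eigenvectorBasis i)
    rwa [hA.eigenvectorBasis.orthonormal.1 i, EuclideanSpace.inner_eq_star_dotProduct, star_trivial,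
      one_pow] at h
  · simpa using (hA.eigenvalues_eq i).symm

theorem IsHermitian.eigenvalues_le_of_forall_dotProduct_mulVec_le {A : Matrix n n ℝ}
    (hA : A.IsHermitian) {c : ℝ} (h : ∀ x, x ⬝ᵥ (A *ᵥ x) ≤ c * (x ⬝ᵥ x)) (i : n) :
    hA.eigenvalues i ≤ c := by
  obtain ⟨b, hb, hbi⟩ := hA.exists_dotProduct_mulVec_eq_eigenvalues i
  simpa [hb, hbi] using h b

theorem IsHermitian.le_eigenvalues_of_forall_le_dotProduct_mulVec {A : Matrix n n ℝ}
    (hA : A.IsHermitian) {c : ℝ} (h : ∀ x, c * (x ⬝ᵥ x) ≤ x ⬝ᵥ (A *ᵥ x)) (i : n) :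
    c ≤ hA.eigenvalues i := by
  obtain ⟨b, hb, hbi⟩ := hA.exists_dotProduct_mulVec_eq_eigenvalues i
  simpa [hb, hbi] using h b

theorem IsHermitian.roots_charpoly_map_ofReal_of_charpoly_eq {M A : Matrix n n ℝ}
    (hA : A.IsHermitian) (hMA : M.charpoly = A.charpoly) :
    (M.map Complex.ofReal).charpoly.roots =
      Finset.univ.val.map fun i => (hA.eigenvalues i : ℂ) := by
  rw [show M.map Complex.ofReal = M.map Complex.ofRealHom from rfl, charpoly_map, hMA,
    hA.charpoly_eq, Polynomial.map_prod]
  simp only [Polynomial.map_sub, Polynomial.map_X, Polynomial.map_C]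
  rw [Polynomial.roots_prod]
  · simp
  · simp [Finset.prod_ne_zero_iff, Polynomial.X_sub_C_ne_zero]

theorem dotProduct_vecMulVec_add_diagonal_mulVec (w d x : n → ℝ) :
    x ⬝ᵥ ((vecMulVec w w + diagonal d) *ᵥ x) = (w ⬝ᵥ x) ^ 2 + ∑ i, d i * x i ^ 2 := by
  rw [add_mulVec, dotProduct_add, sq]
  congr 1
  · simp only [mulVec, dotProduct, vecMulVec_apply]
    rw [Finset.sum_mul_sum]
    simp only [Finset.mul_sum]
    exact Finset.sum_congr rfl fun i _ => Finset.sum_congr rfl fun j _ => by ring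
  · simp only [mulVec_diagonal, dotProduct]
    exact Finset.sum_congr rfl fun i _ => by ring

theorem dotProduct_vecMulVec_add_diagonal_mulVec_nonneg {d : n → ℝ} (hd : 0 ≤ d) (w x : n → ℝ) :
    0 ≤ x ⬝ᵥ ((vecMulVec w w + diagonal d) *ᵥ x) := by
  rw [dotProduct_vecMulVec_add_diagonal_mulVec]
  exact add_nonneg (sq_nonneg _) (Finset.sum_nonneg fun i _ => mul_nonneg (hd i) (sq_nonneg _))

theorem dotProduct_vecMulVec_add_diagonal_mulVec_le {d : n → ℝ} {c : ℝ} (hdc : ∀ i, d i ≤ c)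
    (w x : n → ℝ) :
    x ⬝ᵥ ((vecMulVec w w + diagonal d) *ᵥ x) ≤ (w ⬝ᵥ w + c) * (x ⬝ᵥ x) := by
  have hcs : (w ⬝ᵥ x) ^ 2 ≤ (w ⬝ᵥ w) * (x ⬝ᵥ x) := by
    simpa only [dotProduct, sq] using Finset.sum_mul_sq_le_sq_mul_sq Finset.univ w x
  have hdiag : ∑ i, d i * x i ^ 2 ≤ c * (x ⬝ᵥ x) := by
    simp only [dotProduct, Finset.mul_sum, ← sq]
    exact Finset.sum_le_sum fun i _ => mul_le_mul_of_nonneg_right (hdc i) (sq_nonneg _)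
  rw [dotProduct_vecMulVec_add_diagonal_mulVec]
  linarith

omit [Fintype n] in
theorem isHermitian_vecMulVec_self_add_diagonal (w d : n → ℝ) :
    (vecMulVec w w + diagonal d).IsHermitian := by
  refine IsHermitian.add ?_ (isHermitian_diagonal_of_self_adjoint _ (by simp [IsSelfAdjoint]))
  simp [IsHermitian]

theorem diagonal_mul_vecMulVec_add_diagonal {R : Type*} [CommRing R] {u v w e : n → R}
    (hu : ∀ i, e i * u i = w i) (hv : ∀ i, w i * e i = v i) (d : n → R) :
    diagonal e * (vecMulVec u v + diagonal d) = (vecMulVec w w + diagonal d) * diagonal e := by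
  ext i j
  simp only [mul_add, add_mul, add_apply, diagonal_mul, mul_diagonal, vecMulVec_apply,
    diagonal_apply, ← hu i, ← hv j]
  split_ifs with h
  · subst h; ring
  · ring

theorem exists_isUnit_diagonal_mul_vecMulVec_add_diagonal {u v : n → ℝ}
    (huv : ∀ i, 0 < u i ∧ 0 < v i ∨ u i = 0 ∧ v i = 0) (d : n → ℝ) :
    ∃ e : n → ℝ, IsUnit e ∧ diagonal e * (vecMulVec u v + diagonal d) =
      (vecMulVec (fun i => √(u i * v i)) (fun i => √(u i * v i)) + diagonal d) * diagonal e := by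
  -- `eᵢ = √(vᵢ / uᵢ)` balances row `i` against column `i`.
  refine ⟨fun i => if u i = 0 then 1 else √(v i) / √(u i), ?_,
    diagonal_mul_vecMulVec_add_diagonal (fun i => ?_) (fun i => ?_) d⟩
  · refine Pi.isUnit_iff.2 fun i => ?_
    rcases huv i with ⟨hu, hv⟩ | ⟨hu, -⟩
    · simp [hu.ne', (Real.sqrt_pos.2 hu).ne', (Real.sqrt_pos.2 hv).ne']
    · simp [hu]
  all_goals
    rcases huv i with ⟨hu, hv⟩ | ⟨hu, hv⟩
    · have := Real.sqrt_pos.2 hu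
      simp only [hu.ne', if_false, Real.sqrt_mul hu.le]
      field_simp
      simp [Real.sq_sqrt, hu.le, hv.le]
    · simp [hu, hv]

theorem charpoly_neg_vecMulVec_add_diagonal {u v : n → ℝ}
    (huv : ∀ i, 0 < u i ∧ 0 < v i ∨ u i = 0 ∧ v i = 0) (d : n → ℝ) :
    (-(vecMulVec u v + diagonal d)).charpoly =
      (-(vecMulVec (fun i => √(u i * v i)) (fun i => √(u i * v i)) + diagonal d)).charpoly := by
  obtain ⟨e, he, h⟩ := exists_isUnit_diagonal_mul_vecMulVec_add_diagonal huv d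
  exact charpoly_eq_of_diagonal_mul_eq he (by rw [mul_neg, h, neg_mul])

omit [DecidableEq n] in
theorem sqrt_mul_dotProduct_sqrt_mul {u v : n → ℝ}
    (huv : ∀ i, 0 < u i ∧ 0 < v i ∨ u i = 0 ∧ v i = 0) :
    (fun i => √(u i * v i)) ⬝ᵥ (fun i => √(u i * v i)) = ∑ i, u i * v i :=
  Finset.sum_congr rfl fun i _ => Real.mul_self_sqrt <| by
    rcases huv i with ⟨hu, hv⟩ | ⟨hu, -⟩
    exacts [mul_nonneg hu.le hv.le, by simp [hu]]

/-- `r` is the largest modulus of a complex eigenvalue of `M`. -/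
def IsSpectralRadius (M : Matrix n n ℝ) (r : ℝ) : Prop :=
  (∀ z ∈ (M.map Complex.ofReal).charpoly.roots, ‖z‖ ≤ r) ∧
    ∃ z ∈ (M.map Complex.ofReal).charpoly.roots, ‖z‖ = r

namespace IsSpectralRadius

variable {M A : Matrix n n ℝ} {r : ℝ}

theorem abs_eigenvalues_le (hr : M.IsSpectralRadius r) (hA : A.IsHermitian)
    (hMA : M.charpoly = A.charpoly) (i : n) : |hA.eigenvalues i| ≤ r := by
  have := hr.1 _ ((hA.roots_charpoly_map_ofReal_of_charpoly_eq hMA).symm ▸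
    Multiset.mem_map_of_mem _ (Finset.mem_univ_val i))
  rwa [Complex.norm_real, Real.norm_eq_abs] at this

theorem exists_abs_eigenvalues_eq (hr : M.IsSpectralRadius r) (hA : A.IsHermitian)
    (hMA : M.charpoly = A.charpoly) : ∃ i, |hA.eigenvalues i| = r := by
  obtain ⟨z, hz, rfl⟩ := hr.2
  rw [hA.roots_charpoly_map_ofReal_of_charpoly_eq hMA] at hz
  obtain ⟨i, -, rfl⟩ := Multiset.mem_map.1 hz
  exact ⟨i, by rw [Complex.norm_real, Real.norm_eq_abs]⟩

section NegVecMulVecAddDiagonal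

variable {u v d : n → ℝ} {r : ℝ} (huv : ∀ i, 0 < u i ∧ 0 < v i ∨ u i = 0 ∧ v i = 0)
  (hr : (-(vecMulVec u v + diagonal d)).IsSpectralRadius r)
include huv hr

theorem apply_le_of_neg_vecMulVec_add_diagonal (k : n) : d k ≤ r := by
  set w : n → ℝ := fun i => √(u i * v i)
  have hA := (isHermitian_vecMulVec_self_add_diagonal w d).neg
  have : Nonempty n := ⟨k⟩
  obtain ⟨i, hi⟩ := hA.exists_eigenvalues_mul_le (Pi.single k 1)
  have hq : Pi.single k 1 ⬝ᵥ (-(vecMulVec w w + diagonal d) *ᵥ Pi.single k 1) =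
      -(w k ^ 2 + d k) := by
    rw [neg_mulVec, dotProduct_neg, dotProduct_vecMulVec_add_diagonal_mulVec]
    simp [Pi.single_apply]
  rw [hq, single_dotProduct, one_mul, Pi.single_eq_same, mul_one] at hi
  linarith [neg_abs_le (hA.eigenvalues i), sq_nonneg (w k),
    hr.abs_eigenvalues_le hA (charpoly_neg_vecMulVec_add_diagonal huv d) i]

theorem sum_mul_le_of_neg_vecMulVec_add_diagonal (hd : 0 ≤ d) : ∑ i, u i * v i ≤ r := by
  set w : n → ℝ := fun i => √(u i * v i)
  have hA := (isHermitian_vecMulVec_self_add_diagonal w d).neg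
  have hMA := charpoly_neg_vecMulVec_add_diagonal huv d
  obtain ⟨j, hj⟩ := hr.exists_abs_eigenvalues_eq hA hMA
  have : Nonempty n := ⟨j⟩
  obtain ⟨i, hi⟩ := hA.exists_eigenvalues_mul_le w
  have hle := hr.abs_eigenvalues_le hA hMA i
  have hq : w ⬝ᵥ (-(vecMulVec w w + diagonal d) *ᵥ w) ≤ -(w ⬝ᵥ w) ^ 2 := by
    rw [neg_mulVec, dotProduct_neg, dotProduct_vecMulVec_add_diagonal_mulVec, neg_le_neg_iff]
    exact le_add_of_nonneg_right (Finset.sum_nonneg fun i _ => mul_nonneg (hd i) (sq_nonneg _))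
  have hT : 0 ≤ w ⬝ᵥ w := Finset.sum_nonneg fun i _ => mul_self_nonneg (w i)
  rw [← sqrt_mul_dotProduct_sqrt_mul huv]
  nlinarith [neg_abs_le (hA.eigenvalues i), abs_nonneg (hA.eigenvalues j)]

theorem le_add_sum_mul_of_neg_vecMulVec_add_diagonal (hd : 0 ≤ d) {c : ℝ} (hdc : ∀ i, d i ≤ c) :
    r ≤ c + ∑ i, u i * v i := by
  set w : n → ℝ := fun i => √(u i * v i)
  have hA := (isHermitian_vecMulVec_self_add_diagonal w d).neg
  obtain ⟨j, hj⟩ := hr.exists_abs_eigenvalues_eq hA (charpoly_neg_vecMulVec_add_diagonal huv d)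
  have hnonpos : hA.eigenvalues j ≤ 0 := by
    refine hA.eigenvalues_le_of_forall_dotProduct_mulVec_le (fun x => ?_) j
    rw [neg_mulVec, dotProduct_neg, zero_mul, neg_nonpos]
    exact dotProduct_vecMulVec_add_diagonal_mulVec_nonneg hd w x
  have hge : -(w ⬝ᵥ w + c) ≤ hA.eigenvalues j := by
    refine hA.le_eigenvalues_of_forall_le_dotProduct_mulVec (fun x => ?_) j
    rw [neg_mulVec, dotProduct_neg, neg_mul, neg_le_neg_iff]
    exact dotProduct_vecMulVec_add_diagonal_mulVec_le hdc w x
  rw [← hj, abs_of_nonpos hnonpos, ← sqrt_mul_dotProduct_sqrt_mul huv]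
  linarith

end NegVecMulVecAddDiagonal

end IsSpectralRadius

end Matrix

theorem sin_pi_mul_div_mul_rpow_pos {α J t : ℝ} (hα0 : 0 < α) (hα1 : α < 1) (hJ : 0 < J)
    (ht : 0 < t) (p : ℝ) : 0 < 2 * Real.sin (Real.pi * α) / (Real.pi * J) * t ^ p := by
  have := Real.sin_pos_of_pos_of_lt_pi (by positivity : 0 < Real.pi * α)
    (by nlinarith [Real.pi_pos] : Real.pi * α < Real.pi)
  positivity

noncomputable def relaxationMatrix (L : ℕ) (Ju η A α : ℝ) (θ μ γ Υ : Fin L → ℝ) :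
    Matrix (Fin (L + 2)) (Fin (L + 2)) ℝ :=
  of fun i j =>
    if (i : ℕ) = 0 ∨ (j : ℕ) = 0 then 0
    else if (i : ℕ) = 1 ∧ (j : ℕ) = 1 then -1 / (Ju * η)
    else if h : (i : ℕ) = 1 ∧ 2 ≤ (j : ℕ) then
      -A * Real.Gamma (1 + α) * μ ⟨(j : ℕ) - 2, by omega⟩ / Ju
    else if h : 2 ≤ (i : ℕ) ∧ (j : ℕ) = 1 then
      -γ ⟨(i : ℕ) - 2, by omega⟩ / η
    else if h : 2 ≤ (i : ℕ) ∧ 2 ≤ (j : ℕ) then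
      -Υ ⟨(i : ℕ) - 2, by omega⟩ * μ ⟨(j : ℕ) - 2, by omega⟩
        - (θ ⟨(i : ℕ) - 2, by omega⟩) ^ 2 * (if i = j then 1 else 0)
    else 0

theorem relaxationMatrix_eq {L : ℕ} {Ju η A α : ℝ} {θ μ γ Υ : Fin L → ℝ}
    (hΥ : ∀ ℓ, Υ ℓ = A * Real.Gamma (1 + α) * γ ℓ) :
    relaxationMatrix L Ju η A α θ μ γ Υ =
      -(vecMulVec (vecCons 0 (vecCons Ju⁻¹ γ))
          (vecCons 0 (vecCons η⁻¹ fun ℓ => A * Real.Gamma (1 + α) * μ ℓ)) +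
        diagonal (vecCons 0 (vecCons 0 fun ℓ => θ ℓ ^ 2))) := by
  have h1 : ∀ ℓ : Fin L, ℓ.succ.succ ≠ (1 : Fin (L + 2)) := fun ℓ => by simp [Fin.ext_iff]
  ext i j
  refine Fin.cases ?_ (Fin.cases ?_ fun ℓ => ?_) i <;>
    refine Fin.cases ?_ (Fin.cases ?_ fun k => ?_) j <;>
    simp [relaxationMatrix, diagonal_apply, hΥ, h1] <;> ring

theorem stmt_4 (L : ℕ) (hL : 1 ≤ L) (Ju η A α : ℝ) (hJ : 0 < Ju) (hη : 0 < η) (hA : 0 < A)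
    (hα0 : 0 < α) (hα1 : α < 1)
    (θ μ γ Υ : Fin L → ℝ) (hθ : ∀ ℓ, 0 < θ ℓ) (hmono : StrictMono θ) (hμ : ∀ ℓ, 0 < μ ℓ)
    (hγ : ∀ ℓ, γ ℓ = (2 * Real.sin (Real.pi * α) / (Real.pi * Ju)) * θ ℓ ^ (1 - 2 * α))
    (hΥ : ∀ ℓ, Υ ℓ = A * Real.Gamma (1 + α) * γ ℓ)
    (S : Matrix (Fin (L + 2)) (Fin (L + 2)) ℝ)
    (hS : ∀ i j : Fin (L + 2), S i j =
      if (i : ℕ) = 0 ∨ (j : ℕ) = 0 then 0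
      else if (i : ℕ) = 1 ∧ (j : ℕ) = 1 then -1 / (Ju * η)
      else if h : (i : ℕ) = 1 ∧ 2 ≤ (j : ℕ) then
        -A * Real.Gamma (1 + α) * μ ⟨(j : ℕ) - 2, by have := j.isLt; omega⟩ / Ju
      else if h : 2 ≤ (i : ℕ) ∧ (j : ℕ) = 1 then
        -γ ⟨(i : ℕ) - 2, by have := i.isLt; omega⟩ / η
      else if h : 2 ≤ (i : ℕ) ∧ 2 ≤ (j : ℕ) then
        -Υ ⟨(i : ℕ) - 2, by have := i.isLt; omega⟩ * μ ⟨(j : ℕ) - 2, by have := j.isLt; omega⟩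
          - (θ ⟨(i : ℕ) - 2, by have := i.isLt; omega⟩) ^ 2 * (if i = j then 1 else 0)
      else 0) :
    ∀ r : ℝ,
      (∀ z ∈ ((S.map (Complex.ofReal)).charpoly).roots, ‖z‖ ≤ r) →
      (∃ z ∈ ((S.map (Complex.ofReal)).charpoly).roots, ‖z‖ = r) →
      max ((θ ⟨L - 1, by omega⟩) ^ 2) (1 / (Ju * η) + ∑ ℓ : Fin L, μ ℓ * Υ ℓ) ≤ r ∧
        r ≤ (θ ⟨L - 1, by omega⟩) ^ 2 + 1 / (Ju * η) + ∑ ℓ : Fin L, μ ℓ * Υ ℓ := by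
  intro r hle hex
  have hr : S.IsSpectralRadius r := ⟨hle, hex⟩
  rw [show S = relaxationMatrix L Ju η A α θ μ γ Υ from Matrix.ext hS, relaxationMatrix_eq hΥ] at hr
  set κ : Fin L := ⟨L - 1, by omega⟩
  set K := A * Real.Gamma (1 + α)
  set u : Fin (L + 2) → ℝ := vecCons 0 (vecCons Ju⁻¹ γ)
  set v : Fin (L + 2) → ℝ := vecCons 0 (vecCons η⁻¹ fun ℓ => K * μ ℓ)
  set d : Fin (L + 2) → ℝ := vecCons 0 (vecCons 0 fun ℓ => θ ℓ ^ 2)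
  have hK : 0 < K := mul_pos hA (Real.Gamma_pos_of_pos (by linarith))
  have hγpos : ∀ ℓ, 0 < γ ℓ := fun ℓ =>
    hγ ℓ ▸ sin_pi_mul_div_mul_rpow_pos hα0 hα1 hJ (hθ ℓ) _
  have huv : ∀ i, 0 < u i ∧ 0 < v i ∨ u i = 0 ∧ v i = 0 :=
    Fin.cases (.inr ⟨rfl, rfl⟩) (Fin.cases (.inl ⟨inv_pos.2 hJ, inv_pos.2 hη⟩)
      fun ℓ => .inl ⟨hγpos ℓ, mul_pos hK (hμ ℓ)⟩)
  have hd : 0 ≤ d := Fin.cases le_rfl (Fin.cases le_rfl fun ℓ => sq_nonneg (θ ℓ))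
  have hdκ : ∀ i, d i ≤ θ κ ^ 2 := Fin.cases (sq_nonneg _) (Fin.cases (sq_nonneg _) fun ℓ =>
    pow_le_pow_left₀ (hθ ℓ).le (hmono.monotone (Fin.mk_le_mk.2 (by omega))) 2)
  have hsum : ∑ i, u i * v i = 1 / (Ju * η) + ∑ ℓ, μ ℓ * Υ ℓ := by
    simp [Fin.sum_univ_succ, u, v, hΥ, K, mul_comm, mul_left_comm]
  rw [add_assoc, ← hsum]
  exact ⟨max_le (hr.apply_le_of_neg_vecMulVec_add_diagonal huv κ.succ.succ)
    (hr.sum_mul_le_of_neg_vecMulVec_add_diagonal huv hd),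
    hr.le_add_sum_mul_of_neg_vecMulVec_add_diagonal huv hd hdκ⟩
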